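/- arXiv:2308.06301 — 5 statements merged into one kernel-verified Lean document; each statement's English description precedes it below -/
import Mathlib

section
/- For every odd integer m ≥ 5, the chromatic number of the generalized Grötzsch graph G_m is 4. -/
open SimpleGraph

/-- Vertex type for the graphs on `2m+1` vertices: `Sum.inl i` is the vertex `pᵢ`,
`Sum.inr (Sum.inl i)` is the vertex `qᵢ` (indices taken modulo `m`),
and `Sum.inr (Sum.inr ())` is the apex vertex `a`. -/
abbrev GVert (m : ℕ) := Sum (ZMod m) (Sum (ZMod m) Unit)

/-- The vertex `pᵢ`. -/
def pV {m : ℕ} (i : ZMod m) : GVert m := Sum.inl i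

/-- The vertex `qᵢ`. -/
def qV {m : ℕ} (i : ZMod m) : GVert m := Sum.inr (Sum.inl i)

/-- The apex vertex `a`. -/
def aV (m : ℕ) : GVert m := Sum.inr (Sum.inr ())

/-- The generalized Grötzsch graph `G_m` (intended for odd `m ≥ 5`): edges are
`a qᵢ` for all `i`, `pᵢ pᵢ₊₁` for all `i`, and `pᵢ q_{i + (2k-1)}` for all `i` and
`0 ≤ k ≤ (m-3)/2`, all indices taken modulo `m`. -/
def GenGrotzsch (m : ℕ) : SimpleGraph (GVert m) :=
  SimpleGraph.fromRel (fun u v =>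
    (∃ i : ZMod m, u = aV m ∧ v = qV i) ∨
    (∃ i : ZMod m, u = pV i ∧ v = pV (i + 1)) ∨
    (∃ (i : ZMod m) (k : ℕ), k ≤ (m - 3) / 2 ∧
      u = pV i ∧ v = qV (i + (2 * (k : ZMod m) - 1))))

/-!
The `p`-vertices span the cycle `C_m` and `G_m` is a Mycielski-type extension of it. A colouring
of `C_m` extends to `G_m` by giving all `q`-vertices one fresh colour. Conversely, given a
colouring of `G_m`, recolour each `p`-vertex that has the apex's colour with the colour of its
twin `q_i`. Since `q_i` is adjacent to the apex and to the neighbours `p_{i-1}, p_{i+1}` of `p_i`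
(the latter because `m ≥ 5`), this is a proper colouring of `C_m` that avoids the apex's colour.
Hence `χ(G_m) = χ(C_m) + 1 = 4` for odd `m`.
-/

theorem SimpleGraph.chromaticNumber_eq_add_one_of_colorable_succ_iff {V W : Type*} [Nonempty V]
    {G : SimpleGraph V} {H : SimpleGraph W} (h : ∀ k, G.Colorable (k + 1) ↔ H.Colorable k) :
    G.chromaticNumber = H.chromaticNumber + 1 := by
  refine le_antisymm ?_ ?_
  · cases hH : H.chromaticNumber using ENat.recTopCoe with
    | top => simp
    | coe n =>
      exact_mod_cast ((h n).2 (chromaticNumber_le_iff_colorable.1 hH.le)).chromaticNumber_le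
  · cases hG : G.chromaticNumber using ENat.recTopCoe with
    | top => simp
    | coe n =>
      obtain ⟨k, rfl⟩ : ∃ k, n = k + 1 := Nat.exists_eq_succ_of_ne_zero <| by
        rintro rfl
        exact not_isEmpty_of_nonempty V (chromaticNumber_eq_zero_iff.1 hG)
      push_cast
      gcongr
      exact ((h k).1 (chromaticNumber_le_iff_colorable.1 hG.le)).chromaticNumber_le

theorem chromaticNumber_circulantGraph_one_of_odd {m : ℕ} (h2 : 2 ≤ m) (hodd : Odd m) :
    (circulantGraph ({1} : Set (ZMod m))).chromaticNumber = 3 := by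
  obtain ⟨n, rfl⟩ : ∃ n, m = n + 1 := ⟨m - 1, by omega⟩
  have h := chromaticNumber_cycleGraph_of_odd _ h2 hodd
  -- `ZMod (n + 1)` is `Fin (n + 1)` by definition, with the same additive group.
  rwa [cycleGraph_eq_circulantGraph] at h

namespace GenGrotzsch

variable {m : ℕ}

theorem adj_aV_qV (i : ZMod m) : (GenGrotzsch m).Adj (aV m) (qV i) := by
  rw [GenGrotzsch, fromRel_adj]
  exact ⟨by simp [aV, qV], .inl (.inl ⟨i, rfl, rfl⟩)⟩

theorem adj_pV_qV (i : ZMod m) {k : ℕ} (hk : k ≤ (m - 3) / 2) :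
    (GenGrotzsch m).Adj (pV i) (qV (i + (2 * (k : ZMod m) - 1))) := by
  rw [GenGrotzsch, fromRel_adj]
  exact ⟨by simp [pV, qV], .inl (.inr (.inr ⟨i, k, hk, rfl, rfl⟩))⟩

theorem adj_pV_add_one_qV (i : ZMod m) : (GenGrotzsch m).Adj (pV (i + 1)) (qV i) := by
  have h := adj_pV_qV (i + 1) (k := 0) (Nat.zero_le _)
  rwa [Nat.cast_zero, mul_zero, zero_sub, add_neg_cancel_right] at h

theorem adj_pV_qV_add_one (h5 : 5 ≤ m) (i : ZMod m) :
    (GenGrotzsch m).Adj (pV i) (qV (i + 1)) := by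
  have h := adj_pV_qV i (k := 1) (by omega)
  rwa [Nat.cast_one, mul_one, show (2 : ZMod m) - 1 = 1 by ring] at h

theorem adj_pV_pV_iff {i j : ZMod m} :
    (GenGrotzsch m).Adj (pV i) (pV j) ↔ (circulantGraph ({1} : Set (ZMod m))).Adj i j := by
  simp [GenGrotzsch, circulantGraph_adj, pV, qV, aV, sub_eq_iff_eq_add', or_comm]

theorem adj_pV_pV_add_one (hm : 1 < m) (i : ZMod m) :
    (GenGrotzsch m).Adj (pV i) (pV (i + 1)) := by
  have : Fact (1 < m) := ⟨hm⟩
  exact adj_pV_pV_iff.2 (by simp [circulantGraph_adj])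

def coloringOfCycle {α : Type*} (c : (circulantGraph ({1} : Set (ZMod m))).Coloring α) :
    (GenGrotzsch m).Coloring (Option α) :=
  Coloring.mk
    (fun | .inl i => some (c i) | .inr (.inl _) => none | .inr (.inr _) => some (c 0)) <| by
    intro u v huv
    rcases u with i | i | _ <;> rcases v with j | j | _ <;>
      simp only [ne_eq, reduceCtorEq, not_false_eq_true, Option.some.injEq]
    · exact c.valid (adj_pV_pV_iff.1 huv)
    all_goals simp [GenGrotzsch, pV, qV, aV] at huv

variable {α : Type*} [DecidableEq α]

def recolor (C : (GenGrotzsch m).Coloring α) (i : ZMod m) : α :=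
  if C (pV i) = C (aV m) then C (qV i) else C (pV i)

theorem recolor_ne_apex (C : (GenGrotzsch m).Coloring α) (i : ZMod m) :
    recolor C i ≠ C (aV m) := by
  unfold recolor
  split_ifs with h
  · exact (C.valid (adj_aV_qV i)).symm
  · exact h

theorem recolor_ne_recolor_add_one (h5 : 5 ≤ m) (C : (GenGrotzsch m).Coloring α) (i : ZMod m) :
    recolor C i ≠ recolor C (i + 1) := by
  have hpp := C.valid (adj_pV_pV_add_one (by omega) i)
  unfold recolor
  split_ifs with h h'
  · exact absurd (h.trans h'.symm) hpp
  · exact (C.valid (adj_pV_add_one_qV i)).symm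
  · exact C.valid (adj_pV_qV_add_one h5 i)
  · exact hpp

def cycleColoring (h5 : 5 ≤ m) (C : (GenGrotzsch m).Coloring α) :
    (circulantGraph ({1} : Set (ZMod m))).Coloring {c // c ≠ C (aV m)} :=
  Coloring.mk (fun i => ⟨recolor C i, recolor_ne_apex C i⟩) <| by
    intro i j hij
    simp only [circulantGraph_adj, Set.mem_singleton_iff, sub_eq_iff_eq_add'] at hij
    rcases hij with ⟨-, rfl | rfl⟩
    · exact fun h => recolor_ne_recolor_add_one h5 C j (congrArg Subtype.val h).symm
    · exact fun h => recolor_ne_recolor_add_one h5 C i (congrArg Subtype.val h)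

theorem colorable_succ_iff (h5 : 5 ≤ m) {k : ℕ} :
    (GenGrotzsch m).Colorable (k + 1) ↔ (circulantGraph ({1} : Set (ZMod m))).Colorable k := by
  constructor
  · rintro ⟨C⟩
    simpa using (cycleColoring h5 C).colorable
  · rintro ⟨c⟩
    simpa using (coloringOfCycle c).colorable

theorem chromaticNumber_eq (h5 : 5 ≤ m) :
    (GenGrotzsch m).chromaticNumber = (circulantGraph ({1} : Set (ZMod m))).chromaticNumber + 1 :=
  chromaticNumber_eq_add_one_of_colorable_succ_iff fun _ => colorable_succ_iff h5

end GenGrotzsch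

/-- For every odd integer `m ≥ 5`, the chromatic number of the generalized Grötzsch
graph `G_m` is `4`. -/
theorem genGrotzsch_chromaticNumber (m : ℕ) (h5 : 5 ≤ m) (hodd : Odd m) :
    (GenGrotzsch m).chromaticNumber = 4 := by
  rw [GenGrotzsch.chromaticNumber_eq h5, chromaticNumber_circulantGraph_one_of_odd (by omega) hodd]
  rfl
end

section
/- For every odd integer m ≥ 5, the generalized Grötzsch graph G_m is Hamiltonian, i.e., there exists a cycle in G_m that passes through every vertex of G_m exactly once. -/
open SimpleGraph

namespace GG

variable {V : Type*}

/-- Build a walk from a vertex sequence with consecutive adjacency. -/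
def mkWalk (G : SimpleGraph V) (s : ℕ → V) :
    (n : ℕ) → (∀ i, i < n → G.Adj (s i) (s (i+1))) → G.Walk (s 0) (s n)
  | 0, _ => Walk.nil
  | (n+1), h => (mkWalk G s n (fun i hi => h i (by omega))).concat (h n (by omega))

lemma mkWalk_support (G : SimpleGraph V) (s : ℕ → V) (n : ℕ)
    (h : ∀ i, i < n → G.Adj (s i) (s (i+1))) :
    (mkWalk G s n h).support = (List.range (n+1)).map s := by
  induction n with
  | zero => simp [mkWalk, List.range_succ]
  | succ n ih =>
    rw [mkWalk, Walk.support_concat, ih, List.range_succ]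
    simp [List.range_succ]

lemma mkWalk_edges (G : SimpleGraph V) (s : ℕ → V) (n : ℕ)
    (h : ∀ i, i < n → G.Adj (s i) (s (i+1))) :
    (mkWalk G s n h).edges = (List.range n).map (fun i => s(s i, s (i+1))) := by
  induction n with
  | zero => simp [mkWalk, List.range_succ]
  | succ n ih =>
    rw [mkWalk, Walk.edges_concat, ih, List.range_succ]
    simp [List.range_succ]

lemma zmod_cases {m a b : ℕ} (h : (a : ZMod m) = (b : ZMod m)) (hm : 3 ≤ m)
    (ha : a ≤ 3*m+2) (hb : b ≤ 3*m+2) :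
    a = b ∨ a = b + m ∨ a = b + 2*m ∨ a = b + 3*m ∨
      b = a + m ∨ b = a + 2*m ∨ b = a + 3*m := by
  have h1 : a ≡ b [MOD m] := (ZMod.natCast_eq_natCast_iff _ _ _).mp h
  obtain ⟨k, hk⟩ := (Nat.modEq_iff_dvd).mp h1
  have hk4 : k < 4 := by
    by_contra hc
    push_neg at hc
    have : (m:ℤ) * 4 ≤ (m:ℤ) * k := by
      apply mul_le_mul_of_nonneg_left hc (by positivity)
    omega
  have hk4' : -4 < k := by
    by_contra hc
    push_neg at hc
    have : (m:ℤ) * k ≤ (m:ℤ) * (-4) := by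
      apply mul_le_mul_of_nonneg_left hc (by positivity)
    omega
  interval_cases k <;> omega


/-- The Hamiltonian cycle vertex sequence. -/
def seq (m : ℕ) (t : ℕ) : GVert m :=
  if t ≤ m then (if Even t then pV ((t+1 : ℕ) : ZMod m) else qV ((t+1 : ℕ) : ZMod m))
  else if t = m + 1 then aV m
  else if t ≤ 2*m then
    (if Even t then pV ((2*m+2-t : ℕ) : ZMod m) else qV ((2*m+2-t : ℕ) : ZMod m))
  else pV ((1 : ℕ) : ZMod m)

lemma seq_A {m t : ℕ} (h : t ≤ m) (he : Even t) : seq m t = pV ((t+1 : ℕ) : ZMod m) := by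
  rw [seq, if_pos h, if_pos he]

lemma seq_A' {m t : ℕ} (h : t ≤ m) (he : ¬ Even t) : seq m t = qV ((t+1 : ℕ) : ZMod m) := by
  rw [seq, if_pos h, if_neg he]

lemma seq_B {m : ℕ} (hm : 1 ≤ m) : seq m (m+1) = aV m := by
  rw [seq, if_neg (by omega), if_pos rfl]

lemma seq_C {m t : ℕ} (h1 : m+2 ≤ t) (h2 : t ≤ 2*m) (he : Even t) :
    seq m t = pV ((2*m+2-t : ℕ) : ZMod m) := by
  rw [seq, if_neg (by omega), if_neg (by omega), if_pos h2, if_pos he]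

lemma seq_C' {m t : ℕ} (h1 : m+2 ≤ t) (h2 : t ≤ 2*m) (he : ¬ Even t) :
    seq m t = qV ((2*m+2-t : ℕ) : ZMod m) := by
  rw [seq, if_neg (by omega), if_neg (by omega), if_pos h2, if_neg he]

lemma seq_D {m : ℕ} (hm : 1 ≤ m) : seq m (2*m+1) = pV ((1 : ℕ) : ZMod m) := by
  rw [seq, if_neg (by omega), if_neg (by omega), if_neg (by omega)]

lemma seq_injOn (m : ℕ) (h5 : 5 ≤ m) (hodd : Odd m) :
    ∀ t1, t1 ≤ 2*m → ∀ t2, t2 ≤ 2*m → seq m t1 = seq m t2 → t1 = t2 := by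
  have hm2 : m % 2 = 1 := Nat.odd_iff.mp hodd
  intro t1 h1 t2 h2 heq
  unfold seq at heq
  split_ifs at heq
  all_goals first
    | omega
    | (simp only [pV, qV, aV, Sum.inl.injEq, Sum.inr.injEq, reduceCtorEq] at heq
       all_goals (
         simp only [Nat.even_iff, Nat.not_even_iff] at *
         have h9 := zmod_cases heq (by omega) (by omega) (by omega)
         omega))


lemma adj_pq_succ {m : ℕ} (h5 : 5 ≤ m) (i : ZMod m) :
    (GenGrotzsch m).Adj (pV i) (qV (i+1)) := by
  rw [GenGrotzsch, fromRel_adj]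
  refine ⟨by simp [pV, qV], Or.inl (Or.inr (Or.inr ⟨i, 1, by omega, rfl, ?_⟩))⟩
  congr 1
  push_cast
  ring

lemma adj_pq_pred {m : ℕ} (h5 : 5 ≤ m) (i : ZMod m) :
    (GenGrotzsch m).Adj (pV i) (qV (i-1)) := by
  rw [GenGrotzsch, fromRel_adj]
  refine ⟨by simp [pV, qV], Or.inl (Or.inr (Or.inr ⟨i, 0, by omega, rfl, ?_⟩))⟩
  congr 1
  push_cast
  ring

lemma adj_aq {m : ℕ} (i : ZMod m) : (GenGrotzsch m).Adj (aV m) (qV i) := by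
  rw [GenGrotzsch, fromRel_adj]
  exact ⟨by simp [aV, qV], Or.inl (Or.inl ⟨i, rfl, rfl⟩)⟩

lemma adj_pp {m : ℕ} (h5 : 5 ≤ m) (i : ZMod m) :
    (GenGrotzsch m).Adj (pV i) (pV (i+1)) := by
  haveI : Fact (1 < m) := ⟨by omega⟩
  rw [GenGrotzsch, fromRel_adj]
  refine ⟨?_, Or.inl (Or.inr (Or.inl ⟨i, rfl, rfl⟩))⟩
  simp only [pV, ne_eq, Sum.inl.injEq]
  intro h
  exact one_ne_zero (by linear_combination -h)

lemma seq_adj (m : ℕ) (h5 : 5 ≤ m) (hodd : Odd m) :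
    ∀ t, t < 2*m+1 → (GenGrotzsch m).Adj (seq m t) (seq m (t+1)) := by
  have hm2 : m % 2 = 1 := Nat.odd_iff.mp hodd
  intro t ht
  rcases Nat.even_or_odd t with hev | hod
  · -- Even t
    have hev2 := Nat.even_iff.mp hev
    have hodd1 : ¬ Even (t+1) := by simp [Nat.even_add_one, hev]
    rcases (show t < m ∨ t = m + 1 ∨ (m+2 ≤ t ∧ t ≤ 2*m - 1) ∨ t = 2*m by omega) with
      h | h | ⟨ha, hb⟩ | h
    · rw [seq_A (by omega) hev, seq_A' (by omega) hodd1]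
      rw [show ((t+1+1 : ℕ) : ZMod m) = ((t+1 : ℕ) : ZMod m) + 1 by push_cast; ring]
      exact adj_pq_succ h5 _
    · subst h
      rw [seq_B (by omega), seq_C' (by omega) (by omega) (by omega ∘ Nat.even_iff.mp)]
      exact adj_aq _
    · rw [seq_C (by omega) (by omega) hev, seq_C' (by omega) (by omega) (by
        simpa [Nat.even_add_one] using hev)]
      rw [show ((2*m+2-(t+1) : ℕ) : ZMod m) = ((2*m+2-t : ℕ) : ZMod m) - 1 by
        rw [show 2*m+2-t = (2*m+2-(t+1)) + 1 by omega]; push_cast; ring]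
      exact adj_pq_pred h5 _
    · subst h
      rw [seq_C (by omega) (by omega) hev, seq_D (by omega)]
      rw [show ((2*m+2-(2*m) : ℕ) : ZMod m) = ((1 : ℕ) : ZMod m) + 1 by
        rw [show 2*m+2-(2*m) = 2 by omega]; push_cast; ring]
      exact (adj_pp h5 _).symm
  · -- Odd t
    have hod2 := Nat.odd_iff.mp hod
    have hnev : ¬ Even t := Nat.not_even_iff_odd.mpr hod
    have hev1 : Even (t+1) := by simpa [Nat.even_add_one] using hnev
    rcases (show t < m ∨ t = m ∨ (m+2 ≤ t ∧ t ≤ 2*m - 1) by omega) with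
      h | h | ⟨ha, hb⟩
    · rw [seq_A' (by omega) hnev, seq_A (by omega) hev1]
      rw [show ((t+1 : ℕ) : ZMod m) = ((t+1+1 : ℕ) : ZMod m) - 1 by push_cast; ring]
      exact (adj_pq_pred h5 _).symm
    · subst h
      rw [seq_A' le_rfl hnev, seq_B (by omega)]
      exact (adj_aq _).symm
    · rw [seq_C' (by omega) (by omega) hnev, seq_C (by omega) (by omega) hev1]
      rw [show ((2*m+2-t : ℕ) : ZMod m) = ((2*m+2-(t+1) : ℕ) : ZMod m) + 1 by
        rw [show 2*m+2-t = (2*m+2-(t+1)) + 1 by omega]; push_cast; ring]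
      exact (adj_pq_succ h5 _).symm

end GG

/-- For every odd integer `m ≥ 5`, the generalized Grötzsch graph `G_m` is Hamiltonian:
there exists a cycle visiting every vertex exactly once. -/
theorem genGrotzsch_hamiltonian (m : ℕ) (h5 : 5 ≤ m) (hodd : Odd m) :
    ∃ (v : GVert m) (c : (GenGrotzsch m).Walk v v), c.IsHamiltonianCycle := by
  haveI : NeZero m := ⟨by omega⟩
  set G := GenGrotzsch m with hG
  have hadj : ∀ i, i < 2*m → G.Adj ((fun t => GG.seq m (t+1)) i) ((fun t => GG.seq m (t+1)) (i+1)) :=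
    fun i hi => GG.seq_adj m h5 hodd (i+1) (by omega)
  have e1 : GG.seq m (0+1) = qV ((2 : ℕ) : ZMod m) := by
    rw [show (0+1 : ℕ) = 1 from rfl, GG.seq_A' (by omega) (by simp)]
  have e2 : GG.seq m (2*m+1) = pV ((1 : ℕ) : ZMod m) := GG.seq_D (by omega)
  let P : G.Walk (qV ((2 : ℕ) : ZMod m)) (pV ((1 : ℕ) : ZMod m)) :=
    (GG.mkWalk G (fun t => GG.seq m (t+1)) (2*m) hadj).copy e1 (by exact e2)
  have hinj := GG.seq_injOn m h5 hodd
  have h0eq : GG.seq m 0 = pV ((1 : ℕ) : ZMod m) := by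
    rw [GG.seq_A (by omega) (by simp)]
  have h1eq : GG.seq m 1 = qV ((2 : ℕ) : ZMod m) := by
    rw [GG.seq_A' (by omega) (by simp)]
  have hP_support : P.support = (List.range (2*m+1)).map (fun t => GG.seq m (t+1)) := by
    rw [Walk.support_copy]
    exact GG.mkWalk_support G _ (2*m) hadj
  have hnd : P.support.Nodup := by
    rw [hP_support]
    refine List.Nodup.map_on ?_ List.nodup_range
    intro x hx y hy hxy
    simp only [List.mem_range] at hx hy
    rcases (show (x+1 ≤ 2*m ∧ y+1 ≤ 2*m) ∨ x = 2*m ∨ y = 2*m by omega) with ⟨hx', hy'⟩ | h | h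
    · have := hinj _ hx' _ hy' hxy
      omega
    · subst h
      rcases (show y + 1 ≤ 2*m ∨ y = 2*m by omega) with hy' | hy'
      · rw [show 2*m+1 = 2*m+1 from rfl] at hxy
        have h02 : GG.seq m 0 = GG.seq m (y+1) := by
          rw [h0eq, ← GG.seq_D (m := m) (by omega)]
          exact hxy
        have := hinj 0 (by omega) (y+1) hy' h02
        omega
      · omega
    · subst h
      rcases (show x + 1 ≤ 2*m ∨ x = 2*m by omega) with hx' | hx'
      · have h02 : GG.seq m 0 = GG.seq m (x+1) := by
          rw [h0eq, ← GG.seq_D (m := m) (by omega)]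
          exact hxy.symm
        have := hinj 0 (by omega) (x+1) hx' h02
        omega
      · omega
  have hPpath : P.IsPath := (Walk.isPath_def _).mpr hnd
  have hPedges : P.edges =
      (List.range (2*m)).map (fun i => s(GG.seq m (i+1), GG.seq m (i+1+1))) := by
    rw [show P.edges = (GG.mkWalk G (fun t => GG.seq m (t+1)) (2*m) hadj).edges from
      Walk.edges_copy _ e1 e2]
    exact GG.mkWalk_edges G _ (2*m) hadj
  have hedge : s(pV ((1 : ℕ) : ZMod m), qV ((2 : ℕ) : ZMod m)) ∉ P.edges := by
    rw [hPedges]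
    simp only [List.mem_map, List.mem_range]
    rintro ⟨i, hi, hie⟩
    rw [Sym2.eq_iff] at hie
    rcases hie with ⟨ha, hb⟩ | ⟨ha, hb⟩
    · have := hinj (i+1) (by omega) 0 (by omega) (ha.trans h0eq.symm)
      omega
    · rcases show i+1+1 ≤ 2*m ∨ i+1 = 2*m by omega with h | h
      · have := hinj (i+1+1) h 0 (by omega) (hb.trans h0eq.symm)
        omega
      · rw [h] at ha
        have := hinj (2*m) (by omega) 1 (by omega) (ha.trans h1eq.symm)
        omega
  have hfirst : G.Adj (pV ((1 : ℕ) : ZMod m)) (qV ((2 : ℕ) : ZMod m)) := by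
    have := GG.seq_adj m h5 hodd 0 (by omega)
    rwa [h0eq, show GG.seq m (0+1) = qV ((2:ℕ) : ZMod m) from e1] at this
  refine ⟨pV ((1 : ℕ) : ZMod m), Walk.cons hfirst P, ?_⟩
  rw [Walk.isHamiltonianCycle_iff_isCycle_and_support_count_tail_eq_one]
  constructor
  · exact (Walk.cons_isCycle_iff P hfirst).mpr ⟨hPpath, hedge⟩
  · intro v
    have htail : (Walk.cons hfirst P).support.tail = P.support := by
      rw [Walk.support_cons, List.tail_cons]
    rw [htail]
    refine @List.count_eq_one_of_mem _ instBEqOfDecidableEq _ _ _ hnd ?_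
    have hlen : P.support.length = 2*m+1 := by rw [hP_support]; simp
    have hcard : P.support.toFinset = Finset.univ := by
      apply Finset.eq_univ_of_card
      rw [List.toFinset_card_of_nodup hnd, hlen]
      simp only [GVert, Fintype.card_sum, ZMod.card, Fintype.card_unit]
      omega
    rw [← List.mem_toFinset, hcard]
    exact Finset.mem_univ v
end

section
/- For every odd integer m ≥ 5, the generalized Grötzsch graph G_m is triangle-free, i.e., it contains no clique on 3 vertices. -/
/-!
The apex `a` is adjacent only to `q`-vertices and no two `q`-vertices are adjacent, so a
triangle consists of `p`-vertices and at most one `q`-vertex. Three `p`-vertices would form a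
triangle in the cycle `C_m`, which has none for `m ≥ 4`. Two `p`-vertices of a triangle are
consecutive, `pᵢ` and `pᵢ₊₁`, and a common `q`-neighbour `q_l` gives `l - i = 2k - 1` and
`l - i - 1 = 2k' - 1`, i.e. `2k = 2k' + 1` in `ZMod m` with both sides in `[0, m)`, which
parity rules out.
-/

open SimpleGraph

theorem not_pairwise_succ_triangle {R : Type*} [CommRing R] (h3 : (3 : R) ≠ 0) {a b c : R}
    (hab : b = a + 1 ∨ a = b + 1) (hbc : c = b + 1 ∨ b = c + 1)
    (hca : a = c + 1 ∨ c = a + 1) : False := by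
  have h1 : (1 : R) ≠ 0 := fun h => h3 (by linear_combination 3 * h)
  rcases hab with hab | hab <;> rcases hbc with hbc | hbc <;> rcases hca with hca | hca
  · exact h3 (by linear_combination -hab - hbc - hca)
  · exact h1 (by linear_combination -hab - hbc + hca)
  · exact h1 (by linear_combination -hab + hbc - hca)
  · exact h1 (by linear_combination hab - hbc - hca)
  · exact h1 (by linear_combination hab - hbc - hca)
  · exact h1 (by linear_combination -hab + hbc - hca)
  · exact h1 (by linear_combination -hab - hbc + hca)
  · exact h3 (by linear_combination -hab - hbc - hca)

theorem ZMod.natCast_ne_natCast_of_lt {m a b : ℕ} (ha : a < m) (hb : b < m) (hab : a ≠ b) :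
    (a : ZMod m) ≠ b := by
  rw [Ne, ZMod.natCast_eq_natCast_iff', Nat.mod_eq_of_lt ha, Nat.mod_eq_of_lt hb]
  exact hab

theorem ZMod.two_mul_ne_two_mul_add_one {m k k' : ℕ} (hk : 2 * k < m) (hk' : 2 * k' + 1 < m) :
    (2 * k : ZMod m) ≠ 2 * k' + 1 := by
  exact_mod_cast ZMod.natCast_ne_natCast_of_lt hk hk' (by omega)

namespace GenGrotzsch

variable {m : ℕ}

theorem exists_eq_pV_or_exists_eq_qV_or_eq_aV (v : GVert m) :
    (∃ i, v = pV i) ∨ (∃ i, v = qV i) ∨ v = aV m := by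
  rcases v with i | i | ⟨⟩
  exacts [.inl ⟨i, rfl⟩, .inr (.inl ⟨i, rfl⟩), .inr (.inr rfl)]

theorem not_adj_qV_qV (i j : ZMod m) : ¬ (GenGrotzsch m).Adj (qV i) (qV j) := by
  simp [GenGrotzsch, pV, qV, aV]

theorem not_adj_aV_pV (i : ZMod m) : ¬ (GenGrotzsch m).Adj (aV m) (pV i) := by
  simp [GenGrotzsch, pV, qV, aV]

theorem not_adj_pV_aV (i : ZMod m) : ¬ (GenGrotzsch m).Adj (pV i) (aV m) :=
  fun h => not_adj_aV_pV i h.symm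

theorem eq_add_one_or_eq_add_one_of_adj_pV_pV {i j : ZMod m}
    (h : (GenGrotzsch m).Adj (pV i) (pV j)) : j = i + 1 ∨ i = j + 1 := by
  simp only [GenGrotzsch, fromRel_adj, pV, qV, aV, reduceCtorEq, Sum.inl.injEq,
    exists_false, exists_eq_left', and_false, or_false, false_or] at h
  exact h.2

theorem exists_eq_add_of_adj_pV_qV {i l : ZMod m} (h : (GenGrotzsch m).Adj (pV i) (qV l)) :
    ∃ k : ℕ, k ≤ (m - 3) / 2 ∧ l = i + (2 * k - 1) := by
  simpa [GenGrotzsch, pV, qV, aV] using h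

theorem not_adj_pV_pV_pV (h5 : 5 ≤ m) {i j l : ZMod m} (hij : (GenGrotzsch m).Adj (pV i) (pV j))
    (hjl : (GenGrotzsch m).Adj (pV j) (pV l)) : ¬ (GenGrotzsch m).Adj (pV l) (pV i) := by
  intro hli
  have h3 : (3 : ZMod m) ≠ 0 := by
    exact_mod_cast ZMod.natCast_ne_natCast_of_lt (m := m) (a := 3) (b := 0) (by omega) (by omega)
      (by omega)
  exact not_pairwise_succ_triangle h3 (eq_add_one_or_eq_add_one_of_adj_pV_pV hij)
    (eq_add_one_or_eq_add_one_of_adj_pV_pV hjl) (eq_add_one_or_eq_add_one_of_adj_pV_pV hli)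

theorem not_adj_pV_qV_of_adj_pV_pV (h5 : 5 ≤ m) {i j l : ZMod m}
    (hij : (GenGrotzsch m).Adj (pV i) (pV j)) (hil : (GenGrotzsch m).Adj (pV i) (qV l)) :
    ¬ (GenGrotzsch m).Adj (pV j) (qV l) := by
  intro hjl
  obtain ⟨k, hk, rfl⟩ := exists_eq_add_of_adj_pV_qV hil
  obtain ⟨k', hk', hl⟩ := exists_eq_add_of_adj_pV_qV hjl
  rcases eq_add_one_or_eq_add_one_of_adj_pV_pV hij with rfl | rfl
  · exact ZMod.two_mul_ne_two_mul_add_one (m := m) (k := k) (k' := k') (by omega) (by omega)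
      (by linear_combination hl)
  · exact ZMod.two_mul_ne_two_mul_add_one (m := m) (k := k') (k' := k) (by omega) (by omega)
      (by linear_combination -hl)

theorem not_triangle (h5 : 5 ≤ m) {x y z : GVert m} (hxy : (GenGrotzsch m).Adj x y)
    (hxz : (GenGrotzsch m).Adj x z) (hyz : (GenGrotzsch m).Adj y z) : False := by
  rcases exists_eq_pV_or_exists_eq_qV_or_eq_aV x with ⟨i, rfl⟩ | ⟨i, rfl⟩ | rfl <;>
  rcases exists_eq_pV_or_exists_eq_qV_or_eq_aV y with ⟨j, rfl⟩ | ⟨j, rfl⟩ | rfl <;>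
  rcases exists_eq_pV_or_exists_eq_qV_or_eq_aV z with ⟨l, rfl⟩ | ⟨l, rfl⟩ | rfl <;>
  simp -failIfUnchanged only [not_adj_qV_qV, not_adj_aV_pV, not_adj_pV_aV, SimpleGraph.irrefl]
    at hxy hxz hyz
  -- what survives: three `p`-vertices, or two `p`-vertices and a `q`-vertex in some order
  · exact not_adj_pV_pV_pV h5 hxy hyz hxz.symm
  · exact not_adj_pV_qV_of_adj_pV_pV h5 hxy hxz hyz
  · exact not_adj_pV_qV_of_adj_pV_pV h5 hxz hxy hyz.symm
  · exact not_adj_pV_qV_of_adj_pV_pV h5 hyz hxy.symm hxz.symm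

end GenGrotzsch

theorem genGrotzsch_triangleFree_general (m : ℕ) (h5 : 5 ≤ m) :
    (GenGrotzsch m).CliqueFree 3 := by
  intro s hs
  obtain ⟨x, y, z, hxy, hxz, hyz, -⟩ := is3Clique_iff.1 hs
  exact GenGrotzsch.not_triangle h5 hxy hxz hyz

/-- For every odd integer `m ≥ 5`, the generalized Grötzsch graph `G_m` is
triangle-free. -/
theorem genGrotzsch_triangleFree (m : ℕ) (h5 : 5 ≤ m) (hodd : Odd m) :
    (GenGrotzsch m).CliqueFree 3 :=
  genGrotzsch_triangleFree_general m h5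
end

section
/- For every odd integer m ≥ 5, the generalized Grötzsch graph G_m is maximal triangle-free: G_m is triangle-free, and for any two distinct non-adjacent vertices u and v of G_m, the graph obtained from G_m by adding the edge uv contains a triangle (a 3-clique). -/
open SimpleGraph

namespace GGaux

/-- The set of admissible offsets `j - i` for an edge `pᵢ qⱼ`. -/
def D (m : ℕ) (d : ZMod m) : Prop := ∃ k : ℕ, k ≤ (m - 3) / 2 ∧ d = 2 * (k : ZMod m) - 1

variable {m : ℕ}

lemma castval [NeZero m] (d : ZMod m) : ((d.val : ℕ) : ZMod m) = d :=
  ZMod.natCast_rightInverse d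

lemma memD (h5 : 5 ≤ m) {w : ℕ} (hw : Odd w) (hw4 : w ≤ m - 4) : D m ((w : ℕ) : ZMod m) := by
  obtain ⟨t, ht⟩ := hw
  refine ⟨t + 1, by omega, ?_⟩
  subst ht; push_cast; ring

lemma Dneg1 (h5 : 5 ≤ m) : D m (-1) := ⟨0, Nat.zero_le _, by push_cast; ring⟩

lemma D1 (h5 : 5 ≤ m) : D m (1 : ZMod m) := by
  have := memD h5 (odd_one) (by omega : 1 ≤ m - 4)
  simpa using this

lemma cast_m_sub_one (h5 : 5 ≤ m) : (((m - 1 : ℕ)) : ZMod m) = (-1 : ZMod m) := by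
  have : ((m : ℕ) : ZMod m) = 0 := ZMod.natCast_self m
  rw [Nat.cast_sub (by omega : 1 ≤ m), this]; ring

lemma valD (h5 : 5 ≤ m) {d : ZMod m} (hd : D m d) :
    (Odd d.val ∧ d.val ≤ m - 4) ∨ d.val = m - 1 := by
  haveI : NeZero m := ⟨by omega⟩
  obtain ⟨k, hk, rfl⟩ := hd
  rcases Nat.eq_zero_or_pos k with rfl | hk1
  · right
    have h1 : (2 * ((0 : ℕ) : ZMod m) - 1 : ZMod m) = ((m - 1 : ℕ) : ZMod m) := by
      rw [cast_m_sub_one h5]; push_cast; ring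
    rw [h1, ZMod.val_cast_of_lt (by omega : m - 1 < m)]
  · left
    obtain ⟨t, rfl⟩ : ∃ t, k = t + 1 := ⟨k - 1, by omega⟩
    have hle : 2 * t + 1 ≤ m - 4 := by omega
    have h1 : (2 * (((t + 1 : ℕ)) : ZMod m) - 1 : ZMod m) = ((2 * t + 1 : ℕ) : ZMod m) := by
      push_cast; ring
    rw [h1, ZMod.val_cast_of_lt (by omega : 2 * t + 1 < m)]
    exact ⟨⟨t, by omega⟩, hle⟩

lemma notD (h5 : 5 ≤ m) (hodd : Odd m) {d : ZMod m} (hd : ¬ D m d) :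
    (¬ Odd d.val ∧ d.val ≤ m - 3) ∨ d.val = m - 2 := by
  haveI : NeZero m := ⟨by omega⟩
  have hlt : d.val < m := ZMod.val_lt d
  obtain ⟨s, hs⟩ := hodd
  by_cases ho : Odd d.val
  · right
    by_cases h4 : d.val ≤ m - 4
    · exact absurd (castval d ▸ memD h5 ho h4) hd
    · obtain ⟨t, ht⟩ := ho; omega
  · left
    refine ⟨ho, ?_⟩
    rcases Nat.lt_or_ge d.val (m - 1) with h | h
    · rw [Nat.odd_iff] at ho; omega
    · exfalso
      have : d.val = m - 1 := by omega
      exact hd (by rw [← castval d, this, cast_m_sub_one h5]; exact Dneg1 h5)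

lemma val_add_one [NeZero m] {d : ZMod m} (h : d.val + 1 < m) : (d + 1).val = d.val + 1 := by
  have h1 : d + 1 = ((d.val + 1 : ℕ) : ZMod m) := by push_cast [castval]; ring
  rw [h1, ZMod.val_cast_of_lt h]

lemma noConsec (h5 : 5 ≤ m) (hodd : Odd m) {d : ZMod m} (h1 : D m d) (h2 : D m (d + 1)) :
    False := by
  haveI : NeZero m := ⟨by omega⟩
  obtain ⟨s, hs⟩ := hodd
  rcases valD h5 h1 with ⟨ho, hle⟩ | hv
  · have hval : (d + 1).val = d.val + 1 := val_add_one (by omega)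
    rcases valD h5 h2 with ⟨ho2, hle2⟩ | hv2
    · rw [Nat.odd_iff] at ho ho2; omega
    · omega
  · have hd1 : d + 1 = 0 := by
      rw [← castval d, hv, cast_m_sub_one h5]; ring
    rcases valD h5 h2 with ⟨ho2, _⟩ | hv2
    · rw [hd1] at ho2; simp [Nat.odd_iff] at ho2
    · rw [hd1] at hv2; simp at hv2; omega

lemma noConsec' (h5 : 5 ≤ m) (hodd : Odd m) {a b : ZMod m} (h : a - b = 1)
    (ha : D m a) (hb : D m b) : False := by
  have : a = b + 1 := by linear_combination h
  exact noConsec h5 hodd hb (this ▸ ha)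

lemma shiftD (h5 : 5 ≤ m) (hodd : Odd m) {d : ZMod m} (hd : ¬ D m d) :
    D m (d + 1) ∨ D m (d - 1) := by
  haveI : NeZero m := ⟨by omega⟩
  obtain ⟨s, hs⟩ := hodd
  rcases notD h5 ⟨s, hs⟩ hd with ⟨ho, hle⟩ | hv
  · rw [Nat.odd_iff] at ho
    by_cases hc : d.val = m - 3
    · right
      have hdm : d = ((m - 3 : ℕ) : ZMod m) := by rw [← castval d, hc]
      have h2 : d - 1 = ((m - 4 : ℕ) : ZMod m) := by
        rw [hdm, show m - 3 = (m - 4) + 1 by omega]; push_cast; ring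
      rw [h2]
      exact memD h5 (by rw [Nat.odd_iff]; omega) (le_refl _)
    · left
      have h2 : d + 1 = ((d.val + 1 : ℕ) : ZMod m) := by push_cast [castval]; ring
      rw [h2]
      exact memD h5 (by rw [Nat.odd_iff]; omega) (by omega)
  · left
    have h2 : d + 1 = ((m - 1 : ℕ) : ZMod m) := by
      rw [← castval d, hv, show m - 1 = (m - 2) + 1 by omega]; push_cast; ring
    rw [h2, cast_m_sub_one h5]
    exact Dneg1 h5

lemma ppD (h5 : 5 ≤ m) (hodd : Odd m) {d : ZMod m}
    (h0 : d ≠ 0) (h1 : d ≠ 1) (hm1 : d ≠ -1) :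
    ∃ x y : ZMod m, D m x ∧ D m y ∧ x - y = d := by
  haveI : NeZero m := ⟨by omega⟩
  obtain ⟨s, hs⟩ := hodd
  have hlt : d.val < m := ZMod.val_lt d
  have hv0 : d.val ≠ 0 := fun h => h0 ((ZMod.val_eq_zero d).mp h)
  have hv1 : d.val ≠ 1 := by
    intro h
    exact h1 (by rw [← castval d, h]; simp)
  have hvm1 : d.val ≠ m - 1 := by
    intro h
    exact hm1 (by rw [← castval d, h, cast_m_sub_one h5])
  rcases Nat.even_or_odd d.val with he | ho
  · -- even: x = d.val - 1, y = -1
    rw [Nat.even_iff] at he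
    refine ⟨((d.val - 1 : ℕ) : ZMod m), -1, memD h5 (by rw [Nat.odd_iff]; omega) (by omega),
      Dneg1 h5, ?_⟩
    have key : (((d.val - 1) + 1 : ℕ) : ZMod m) = d := by
      rw [show (d.val - 1) + 1 = d.val by omega, castval]
    push_cast [ZMod.cast_id] at key
    linear_combination key
  · -- odd: x = -1, y = m - 1 - d.val
    rw [Nat.odd_iff] at ho
    refine ⟨-1, ((m - 1 - d.val : ℕ) : ZMod m),
      Dneg1 h5, memD h5 (by rw [Nat.odd_iff]; omega) (by omega), ?_⟩
    have key : (((m - 1 - d.val) + d.val : ℕ) : ZMod m) = -1 := by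
      rw [show (m - 1 - d.val) + d.val = m - 1 by omega, cast_m_sub_one h5]
    push_cast [ZMod.cast_id] at key
    rw [castval] at key
    linear_combination -key



section Adj

variable {m : ℕ}

lemma adj_pq {i j : ZMod m} : (GenGrotzsch m).Adj (pV i) (qV j) ↔ D m (j - i) := by
  simp only [GenGrotzsch, fromRel_adj, pV, qV, aV]
  simp only [reduceCtorEq, Sum.inl.injEq, Sum.inr.injEq, ne_eq, not_false_iff, true_and,
    false_and, and_false, exists_false, false_or, or_false, exists_eq_left']
  constructor
  · rintro ⟨i1, k, hk, rfl, rfl⟩; exact ⟨k, hk, by ring⟩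
  · rintro ⟨k, hk, h⟩; exact ⟨i, k, hk, rfl, by linear_combination h⟩

lemma adj_qp {i j : ZMod m} : (GenGrotzsch m).Adj (qV j) (pV i) ↔ D m (j - i) := by
  rw [adj_comm]; exact adj_pq

lemma adj_pp (h5 : 5 ≤ m) {i j : ZMod m} :
    (GenGrotzsch m).Adj (pV i) (pV j) ↔ (j - i = 1 ∨ i - j = 1) := by
  haveI : Fact (1 < m) := ⟨by omega⟩
  simp only [GenGrotzsch, fromRel_adj, pV, qV, aV]
  simp only [reduceCtorEq, Sum.inl.injEq, Sum.inr.injEq, ne_eq, not_false_iff, true_and,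
    false_and, and_false, exists_false, false_or, or_false, exists_eq_left']
  constructor
  · rintro ⟨hne, h | h⟩
    · exact Or.inl (by linear_combination h)
    · exact Or.inr (by linear_combination h)
  · rintro (h | h)
    · refine ⟨fun he => ?_, Or.inl (by linear_combination h)⟩
      rw [he] at h; simp at h
    · refine ⟨fun he => ?_, Or.inr (by linear_combination h)⟩
      rw [he] at h; simp at h

lemma not_adj_qq {i j : ZMod m} : ¬ (GenGrotzsch m).Adj (qV i) (qV j) := by
  simp [GenGrotzsch, fromRel_adj, pV, qV, aV]

lemma not_adj_ap {i : ZMod m} : ¬ (GenGrotzsch m).Adj (aV m) (pV i) := by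
  simp [GenGrotzsch, fromRel_adj, pV, qV, aV]

lemma not_adj_pa {i : ZMod m} : ¬ (GenGrotzsch m).Adj (pV i) (aV m) := by
  simp [GenGrotzsch, fromRel_adj, pV, qV, aV]

lemma adj_aq {i : ZMod m} : (GenGrotzsch m).Adj (aV m) (qV i) := by
  simp [GenGrotzsch, fromRel_adj, pV, qV, aV]

end Adj

section TF

variable {m : ℕ}

lemma triangleFree (h5 : 5 ≤ m) (hodd : Odd m) : (GenGrotzsch m).CliqueFree 3 := by
  haveI : NeZero m := ⟨by omega⟩
  have h1ne : (1 : ZMod m) ≠ 0 := by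
    intro h
    have h' : ((1 : ℕ) : ZMod m) = 0 := by exact_mod_cast h
    have hd := (ZMod.natCast_eq_zero_iff 1 m).mp h'
    have := Nat.le_of_dvd (by norm_num) hd
    omega
  have h3ne : (3 : ZMod m) ≠ 0 := by
    intro h
    have h' : ((3 : ℕ) : ZMod m) = 0 := by exact_mod_cast h
    have hd := (ZMod.natCast_eq_zero_iff 3 m).mp h'
    have := Nat.le_of_dvd (by norm_num) hd
    omega
  intro s hs
  rw [SimpleGraph.is3Clique_iff] at hs
  obtain ⟨x, y, z, hxy, hxz, hyz, -⟩ := hs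
  have haa : ¬ (GenGrotzsch m).Adj (aV m) (aV m) := (GenGrotzsch m).irrefl
  rcases x with i | i | u <;> rcases y with j | j | u' <;> rcases z with l | l | u'' <;>
    simp only [show ∀ (u : Unit), Sum.inr (Sum.inr u) = aV m from fun u => rfl,
      show ∀ (i : ZMod m), (Sum.inr (Sum.inl i) : GVert m) = qV i from fun _ => rfl,
      show ∀ (i : ZMod m), (Sum.inl i : GVert m) = pV i from fun _ => rfl,
      adj_pp h5, adj_pq, adj_qp, not_adj_qq, not_adj_ap, not_adj_pa, haa] at hxy hxz hyz
  · -- p p p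
    rcases hxy with h1 | h1 <;> rcases hxz with h2 | h2 <;> rcases hyz with h3 | h3 <;>
      first
        | exact h1ne (by linear_combination h1 + h2 + h3)
        | exact h1ne (by linear_combination h1 + h2 - h3)
        | exact h1ne (by linear_combination h1 - h2 + h3)
        | exact h1ne (by linear_combination h1 - h2 - h3)
        | exact h1ne (by linear_combination -h1 - h2 - h3)
        | exact h1ne (by linear_combination -h1 - h2 + h3)
        | exact h1ne (by linear_combination -h1 + h2 - h3)
        | exact h1ne (by linear_combination -h1 + h2 + h3)
        | exact h3ne (by linear_combination h1 + h2 + h3)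
        | exact h3ne (by linear_combination h1 + h2 - h3)
        | exact h3ne (by linear_combination h1 - h2 + h3)
        | exact h3ne (by linear_combination h1 - h2 - h3)
        | exact h3ne (by linear_combination -h1 - h2 - h3)
        | exact h3ne (by linear_combination -h1 - h2 + h3)
        | exact h3ne (by linear_combination -h1 + h2 - h3)
        | exact h3ne (by linear_combination -h1 + h2 + h3)
  · -- p p q : hxy pp, hxz : D (l - i), hyz : D (l - j)
    rcases hxy with h | h
    · exact noConsec' h5 hodd (show (l - i) - (l - j) = 1 by linear_combination h) hxz hyz
    · exact noConsec' h5 hodd (show (l - j) - (l - i) = 1 by linear_combination h) hyz hxz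
  · -- p q p : hxy : D (j - i), hxz : pp (l - i = 1 ∨ i - l = 1), hyz : D (j - l)
    rcases hxz with h | h
    · exact noConsec' h5 hodd (show (j - i) - (j - l) = 1 by linear_combination h) hxy hyz
    · exact noConsec' h5 hodd (show (j - l) - (j - i) = 1 by linear_combination h) hyz hxy
  · -- q p p : hxy : D (i - j), hxz : D (i - l), hyz : pp (l - j = 1 ∨ j - l = 1)
    rcases hyz with h | h
    · exact noConsec' h5 hodd (show (i - j) - (i - l) = 1 by linear_combination h) hxy hxz
    · exact noConsec' h5 hodd (show (i - l) - (i - j) = 1 by linear_combination h) hxz hxy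

end TF

section Max

variable {m : ℕ}

lemma not_cf {V : Type*} {G : SimpleGraph V} {x y z : V}
    (hxy : G.Adj x y) (hxz : G.Adj x z) (hyz : G.Adj y z) : ¬ G.CliqueFree 3 := by
  classical
  exact fun h => h {x, y, z} (SimpleGraph.is3Clique_triple_iff.mpr ⟨hxy, hxz, hyz⟩)

lemma maxTF (h5 : 5 ≤ m) (hodd : Odd m) (u v : GVert m) (hne : u ≠ v)
    (hnadj : ¬ (GenGrotzsch m).Adj u v) :
    ¬ (GenGrotzsch m ⊔ SimpleGraph.fromEdgeSet {s(u, v)}).CliqueFree 3 := by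
  haveI : NeZero m := ⟨by omega⟩
  set G' := GenGrotzsch m ⊔ SimpleGraph.fromEdgeSet {s(u, v)} with hG'
  have hsub : ∀ x y : GVert m, (GenGrotzsch m).Adj x y → G'.Adj x y := fun x y h => Or.inl h
  have huv : G'.Adj u v := Or.inr (by simp [SimpleGraph.fromEdgeSet_adj, hne])
  clear_value G'
  rcases u with i | i | w <;> rcases v with j | j | w'
  · -- p p
    have hij : i ≠ j := fun h => hne (by rw [h])
    rw [show (Sum.inl i : GVert m) = pV i from rfl, show (Sum.inl j : GVert m) = pV j from rfl,
      adj_pp h5] at hnadj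
    push_neg at hnadj
    obtain ⟨x, y, hx, hy, hxy⟩ := ppD h5 hodd (d := j - i)
      (fun h => hij (by linear_combination -h))
      hnadj.1
      (fun h => hnadj.2 (by linear_combination -h))
    refine not_cf (x := pV i) (y := pV j) (z := qV (i + x)) huv ?_ ?_
    · exact hsub _ _ (adj_pq.mpr (by rw [show i + x - i = x by ring]; exact hx))
    · exact hsub _ _ (adj_pq.mpr (by rw [show i + x - j = y by linear_combination hxy]; exact hy))
  · -- p q
    rw [show (Sum.inl i : GVert m) = pV i from rfl,
      show (Sum.inr (Sum.inl j) : GVert m) = qV j from rfl, adj_pq] at hnadj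
    rcases shiftD h5 hodd hnadj with hD | hD
    · refine not_cf (x := pV i) (y := qV j) (z := pV (i - 1)) huv ?_ ?_
      · exact hsub _ _ ((adj_pp h5).mpr (Or.inr (by ring)))
      · exact hsub _ _ (adj_qp.mpr (by rw [show j - (i - 1) = j - i + 1 by ring]; exact hD))
    · refine not_cf (x := pV i) (y := qV j) (z := pV (i + 1)) huv ?_ ?_
      · exact hsub _ _ ((adj_pp h5).mpr (Or.inl (by ring)))
      · exact hsub _ _ (adj_qp.mpr (by rw [show j - (i + 1) = j - i - 1 by ring]; exact hD))
  · -- p a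
    refine not_cf (x := pV i) (y := aV m) (z := qV (i + 1)) huv ?_ ?_
    · exact hsub _ _ (adj_pq.mpr (by rw [show i + 1 - i = 1 by ring]; exact D1 h5))
    · exact hsub _ _ adj_aq
  · -- q p
    rw [show (Sum.inr (Sum.inl i) : GVert m) = qV i from rfl,
      show (Sum.inl j : GVert m) = pV j from rfl, adj_qp] at hnadj
    rcases shiftD h5 hodd hnadj with hD | hD
    · refine not_cf (x := qV i) (y := pV j) (z := pV (j - 1)) huv ?_ ?_
      · exact hsub _ _ (adj_qp.mpr (by rw [show i - (j - 1) = i - j + 1 by ring]; exact hD))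
      · exact hsub _ _ ((adj_pp h5).mpr (Or.inr (by ring)))
    · refine not_cf (x := qV i) (y := pV j) (z := pV (j + 1)) huv ?_ ?_
      · exact hsub _ _ (adj_qp.mpr (by rw [show i - (j + 1) = i - j - 1 by ring]; exact hD))
      · exact hsub _ _ ((adj_pp h5).mpr (Or.inl (by ring)))
  · -- q q
    refine not_cf (x := qV i) (y := qV j) (z := aV m) huv ?_ ?_
    · exact hsub _ _ adj_aq.symm
    · exact hsub _ _ adj_aq.symm
  · -- q a : adjacent, contradiction
    exact absurd adj_aq.symm hnadj
  · -- a p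
    refine not_cf (x := aV m) (y := pV j) (z := qV (j + 1)) huv ?_ ?_
    · exact hsub _ _ adj_aq
    · exact hsub _ _ (adj_pq.mpr (by rw [show j + 1 - j = 1 by ring]; exact D1 h5))
  · -- a q : adjacent
    exact absurd adj_aq hnadj
  · -- a a
    exact absurd rfl hne

end Max

end GGaux

/-- For every odd integer `m ≥ 5`, the generalized Grötzsch graph `G_m` is maximal
triangle-free: it is triangle-free, and adding any edge between two distinct
non-adjacent vertices creates a triangle. -/
theorem genGrotzsch_maximalTriangleFree (m : ℕ) (h5 : 5 ≤ m) (hodd : Odd m) :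
    (GenGrotzsch m).CliqueFree 3 ∧
      ∀ u v : GVert m, u ≠ v → ¬ (GenGrotzsch m).Adj u v →
        ¬ (GenGrotzsch m ⊔ SimpleGraph.fromEdgeSet {s(u, v)}).CliqueFree 3 :=
  ⟨GGaux.triangleFree h5 hodd, fun u v hne hnadj => GGaux.maxTF h5 hodd u v hne hnadj⟩
end

section
/- For every odd integer m ≥ 5, the generalized Grötzsch graph G_m admits no proper vertex coloring with 3 colors (i.e., G_m is not 3-colorable). -/
open SimpleGraph

/-- For every odd integer `m ≥ 5`, the generalized Grötzsch graph `G_m` admits no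
proper vertex coloring with `3` colors. -/
theorem genGrotzsch_not_three_colorable (m : ℕ) (h5 : 5 ≤ m) (hodd : Odd m) :
    ¬ (GenGrotzsch m).Colorable 3 := by

  intro hcol
  obtain ⟨C⟩ := hcol
  haveI : Fact (1 < m) := ⟨by omega⟩
  -- adjacency facts
  have haq : ∀ i : ZMod m, (GenGrotzsch m).Adj (aV m) (qV i) := by
    intro i
    refine (SimpleGraph.fromRel_adj _ _ _).2 ⟨by simp [aV, qV], Or.inl (Or.inl ⟨i, rfl, rfl⟩)⟩
  have hpp : ∀ i : ZMod m, (GenGrotzsch m).Adj (pV i) (pV (i + 1)) := by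
    intro i
    refine (SimpleGraph.fromRel_adj _ _ _).2 ⟨?_, Or.inl (Or.inr (Or.inl ⟨i, rfl, rfl⟩))⟩
    simp only [pV, ne_eq, Sum.inl.injEq, left_eq_add]
    exact one_ne_zero
  have hpq1 : ∀ i : ZMod m, (GenGrotzsch m).Adj (pV i) (qV (i + 1)) := by
    intro i
    refine (SimpleGraph.fromRel_adj _ _ _).2
      ⟨by simp [pV, qV], Or.inl (Or.inr (Or.inr ⟨i, 1, by omega, rfl, ?_⟩))⟩
    norm_num
  have hpqm : ∀ i : ZMod m, (GenGrotzsch m).Adj (pV i) (qV (i - 1)) := by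
    intro i
    refine (SimpleGraph.fromRel_adj _ _ _).2
      ⟨by simp [pV, qV], Or.inl (Or.inr (Or.inr ⟨i, 0, by omega, rfl, ?_⟩))⟩
    norm_num
    ring_nf
  set A := C (aV m) with hA
  set c : ZMod m → Fin 3 := fun i => if C (pV i) = A then C (qV i) else C (pV i) with hc
  have hqA : ∀ i : ZMod m, C (qV i) ≠ A := fun i h => (C.valid (haq i)) h.symm
  have hcA : ∀ i, c i ≠ A := by
    intro i
    by_cases h : C (pV i) = A
    · simp only [hc, if_pos h]; exact hqA i
    · simp only [hc, if_neg h]; exact h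
  have hcadj : ∀ i, c i ≠ c (i + 1) := by
    intro i
    by_cases h1 : C (pV i) = A <;> by_cases h2 : C (pV (i + 1)) = A
    · exact absurd (h1.trans h2.symm) (C.valid (hpp i))
    · simp only [hc, if_pos h1, if_neg h2]
      have h3 := C.valid (hpqm (i + 1))
      rw [add_sub_cancel_right] at h3
      exact fun h => h3 h.symm
    · simp only [hc, if_neg h1, if_pos h2]
      exact C.valid (hpq1 i)
    · simp only [hc, if_neg h1, if_neg h2]
      exact C.valid (hpp i)
  -- 2-coloring of the odd cycle
  set g : ZMod m → ZMod 2 := fun i => if c i = c 0 then 0 else 1 with hg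
  have hstep : ∀ i, g (i + 1) = g i + 1 := by
    intro i
    have h0 : c 0 ≠ A := hcA 0
    have hi : c i ≠ A := hcA i
    have hi1 : c (i + 1) ≠ A := hcA (i + 1)
    have hne : c i ≠ c (i + 1) := hcadj i
    by_cases h : c i = c 0
    · have : c (i + 1) ≠ c 0 := fun hh => hne (h.trans hh.symm)
      simp [hg, h, this]
    · have key3 : ∀ a x y z : Fin 3, x ≠ a → y ≠ a → z ≠ a → y ≠ z → ¬y = x → z = x := by
        decide
      have heq : c (i + 1) = c 0 := key3 A (c 0) (c i) (c (i + 1)) h0 hi hi1 hne h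
      simp only [hg, if_neg h, if_pos heq]
      decide
  have key : ∀ n : ℕ, g ((n : ZMod m)) = g 0 + (n : ZMod 2) := by
    intro n
    induction n with
    | zero => simp
    | succ k ih => push_cast; rw [hstep, ih]; ring
  have hm := key m
  rw [ZMod.natCast_self] at hm
  have h2 : ((m : ZMod 2)) = 1 := by
    rw [← ZMod.natCast_mod, Nat.odd_iff.mp hodd]
    norm_num
  rw [h2] at hm
  exact one_ne_zero (left_eq_add.mp hm)
end
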